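/- arXiv:0709.0871 — 4 statements merged into one kernel-verified Lean document; each statement's English description precedes it below -/
import Mathlib

section
/- Let {Z_i(n)} be a triangular array of independent mean-zero random vectors in R^d with finite covariance matrices, such that the sum of covariance matrices converges to a positive definite matrix Σ and the Lindeberg condition holds. Then the empirical covariance matrix (n-1)·V_{Z(n)Z(n)} = Σ_{i=1}^n (Z_i(n) − Z̄(n))^T (Z_i(n) − Z̄(n)) converges in probability to Σ as n → ∞. -/
open MeasureTheory ProbabilityTheory Filter Matrix
open scoped BigOperators

/-- Standard `d`-variate normal law `N(0, I_d)` on `Fin d → ℝ`. -/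
noncomputable def stdGaussian (d : ℕ) : Measure (Fin d → ℝ) :=
  Measure.pi fun _ => gaussianReal 0 1

/-- Convergence in distribution (weak convergence of laws), tested against
bounded continuous functions. -/
def TendstoInDistribution {Ω E : Type*} [MeasurableSpace Ω] [MeasurableSpace E]
    [TopologicalSpace E] (P : Measure Ω) (X : ℕ → Ω → E) (ν : Measure E) : Prop :=
  ∀ f : BoundedContinuousFunction E ℝ,
    Tendsto (fun n => ∫ ω, f (X n ω) ∂P) atTop (nhds (∫ x, f x ∂ν))

/-- `L` is the (left) Cholesky square root of `A`: lower triangular with positive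
diagonal, and `L * Lᵀ = A`. -/
def IsCholesky {d : ℕ} (A L : Matrix (Fin d) (Fin d) ℝ) : Prop :=
  (∀ i j : Fin d, i < j → L i j = 0) ∧ (∀ i, 0 < L i i) ∧ L * Lᵀ = A

section AuxLemmas

open scoped ENNReal NNReal

variable {Ω : Type*} [MeasurableSpace Ω] {P : Measure Ω}

/-- squared norm helper -/
def auxQ {d : ℕ} (v : Fin d → ℝ) : ℝ := ∑ j', v j' ^ 2

lemma auxQ_nonneg {d : ℕ} (v : Fin d → ℝ) : 0 ≤ auxQ v :=
  Finset.sum_nonneg fun _ _ => sq_nonneg _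

lemma sq_le_auxQ {d : ℕ} (v : Fin d → ℝ) (j : Fin d) : v j ^ 2 ≤ auxQ v := by
  unfold auxQ
  exact Finset.single_le_sum (f := fun j' => v j' ^ 2) (fun _ _ => sq_nonneg _)
    (Finset.mem_univ j)

lemma measurable_auxQ {d : ℕ} : Measurable (auxQ (d := d)) :=
  Finset.measurable_sum _ fun j' _ => (measurable_pi_apply j').pow_const 2

lemma abs_mul_le_auxQ {d : ℕ} (v : Fin d → ℝ) (j k : Fin d) : |v j * v k| ≤ auxQ v := by
  have h1 := sq_le_auxQ v j
  have h2 := sq_le_auxQ v k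
  rw [abs_mul]
  nlinarith [sq_nonneg (|v j| - |v k|), abs_nonneg (v j), abs_nonneg (v k), sq_abs (v j),
    sq_abs (v k)]

/-- truncated product -/
noncomputable def auxW {d : ℕ} (μ0 : ℝ) (j k : Fin d) (v : Fin d → ℝ) : ℝ :=
  if μ0 ≤ Real.sqrt (auxQ v) then 0 else v j * v k

/-- tail product -/
noncomputable def auxR {d : ℕ} (μ0 : ℝ) (j k : Fin d) (v : Fin d → ℝ) : ℝ :=
  if μ0 ≤ Real.sqrt (auxQ v) then v j * v k else 0

lemma measurable_auxW {d : ℕ} (μ0 : ℝ) (j k : Fin d) : Measurable (auxW μ0 j k) :=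
  Measurable.ite (measurableSet_le measurable_const
    (Real.continuous_sqrt.measurable.comp measurable_auxQ)) measurable_const
    ((measurable_pi_apply j).mul (measurable_pi_apply k))

lemma auxW_add_auxR {d : ℕ} (μ0 : ℝ) (j k : Fin d) (v : Fin d → ℝ) :
    v j * v k = auxW μ0 j k v + auxR μ0 j k v := by
  unfold auxW auxR
  by_cases h : μ0 ≤ Real.sqrt (auxQ v) <;> simp [h]

lemma abs_auxW_le_sq {d : ℕ} {μ0 : ℝ} (hμ0 : 0 < μ0) (j k : Fin d) (v : Fin d → ℝ) :
    |auxW μ0 j k v| ≤ μ0 ^ 2 := by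
  unfold auxW
  by_cases h : μ0 ≤ Real.sqrt (auxQ v)
  · simp [h]; positivity
  · simp only [h, if_false]
    push_neg at h
    have hQ : auxQ v < μ0 ^ 2 := (Real.sqrt_lt' hμ0).mp h
    exact (abs_mul_le_auxQ v j k).trans hQ.le

lemma abs_auxW_le_auxQ {d : ℕ} (μ0 : ℝ) (j k : Fin d) (v : Fin d → ℝ) :
    |auxW μ0 j k v| ≤ auxQ v := by
  unfold auxW
  by_cases h : μ0 ≤ Real.sqrt (auxQ v)
  · simpa [h] using auxQ_nonneg v
  · simpa [h] using abs_mul_le_auxQ v j k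

lemma aux_integrable_mul {f g : Ω → ℝ} (hf : MemLp f 2 P) (hg : MemLp g 2 P) :
    Integrable (fun ω => f ω * g ω) P := by
  refine Integrable.mono' (hf.integrable_sq.add hg.integrable_sq)
    (hf.aestronglyMeasurable.mul hg.aestronglyMeasurable) ?_
  filter_upwards with ω
  simp only [Pi.add_apply]
  rw [Real.norm_eq_abs, abs_mul]
  nlinarith [sq_nonneg (|f ω| - |g ω|), abs_nonneg (f ω), abs_nonneg (g ω), sq_abs (f ω),
    sq_abs (g ω)]

lemma aux_sum_expand (n : ℕ) (x y : Fin n → ℝ) :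
    ∑ i, (x i - (∑ i', x i') / n) * (y i - (∑ i', y i') / n)
      = (∑ i, x i * y i) - (∑ i', x i') * (∑ i', y i') / n := by
  rcases Nat.eq_zero_or_pos n with h | h
  · subst h; simp
  · have hn : (n : ℝ) ≠ 0 := Nat.cast_ne_zero.mpr h.ne'
    have hterm : ∀ i, (x i - (∑ i', x i') / n) * (y i - (∑ i', y i') / n)
        = x i * y i - x i * ((∑ i', y i') / n) - ((∑ i', x i') / n) * y i
          + ((∑ i', x i') / n) * ((∑ i', y i') / n) := fun i => by ring
    rw [Finset.sum_congr rfl fun i _ => hterm i]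
    rw [Finset.sum_add_distrib, Finset.sum_sub_distrib, Finset.sum_sub_distrib,
      ← Finset.sum_mul, ← Finset.mul_sum, Finset.sum_const, Finset.card_univ, Fintype.card_fin,
      nsmul_eq_mul]
    field_simp
    ring

lemma aux_tim_sub {f g : ℕ → Ω → ℝ} {a : ℝ}
    (hf : TendstoInMeasure P f atTop fun _ => a)
    (hg : TendstoInMeasure P g atTop fun _ => (0 : ℝ)) :
    TendstoInMeasure P (fun n ω => f n ω - g n ω) atTop fun _ => a := by
  rw [tendstoInMeasure_iff_dist] at hf hg ⊢
  intro ε hε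
  have h1 := hf (ε / 2) (half_pos hε)
  have h2 := hg (ε / 2) (half_pos hε)
  have hupper : ∀ n, P {ω | ε ≤ dist (f n ω - g n ω) a}
      ≤ P {ω | ε / 2 ≤ dist (f n ω) a} + P {ω | ε / 2 ≤ dist (g n ω) 0} := by
    intro n
    refine le_trans (measure_mono ?_) (measure_union_le _ _)
    intro ω hω
    simp only [Set.mem_setOf_eq, Set.mem_union, Real.dist_eq, sub_zero] at hω ⊢
    by_contra hc
    push_neg at hc
    obtain ⟨hc1, hc2⟩ := hc
    have key : f n ω - g n ω - a = (f n ω - a) + -(g n ω) := by ring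
    have := (abs_add_le (f n ω - a) (-(g n ω)))
    rw [abs_neg] at this
    rw [key] at hω
    linarith
  have hlim : Tendsto (fun n => P {ω | ε / 2 ≤ dist (f n ω) a}
      + P {ω | ε / 2 ≤ dist (g n ω) 0}) atTop (nhds 0) := by
    simpa using h1.add h2
  exact tendsto_of_tendsto_of_tendsto_of_le_of_le' tendsto_const_nhds hlim
    (Eventually.of_forall fun n => zero_le) (Eventually.of_forall hupper)

lemma aux_markov [IsFiniteMeasure P] {g : Ω → ℝ} (hg : Integrable g P)
    (hnn : ∀ ω, 0 ≤ g ω) {c : ℝ} (hc : 0 < c) :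
    P {ω | c ≤ g ω} ≤ ENNReal.ofReal ((∫ ω, g ω ∂P) / c) := by
  have h := mul_meas_ge_le_integral_of_nonneg (Eventually.of_forall hnn) hg c
  have h0 : 0 ≤ ∫ ω, g ω ∂P := integral_nonneg hnn
  rw [ENNReal.le_ofReal_iff_toReal_le (measure_ne_top P _) (div_nonneg h0 hc.le)]
  rw [le_div_iff₀ hc]
  rw [measureReal_def] at h
  linarith

lemma aux_ennreal_tendsto_zero {f : ℕ → ℝ≥0∞}
    (h : ∀ δ : ℝ, 0 < δ → ∀ᶠ n in atTop, f n ≤ ENNReal.ofReal δ) :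
    Tendsto f atTop (nhds 0) := by
  rw [ENNReal.tendsto_atTop_zero]
  intro ε hε
  obtain ⟨r, hr0, hrε⟩ : ∃ r : ℝ, 0 < r ∧ ENNReal.ofReal r ≤ ε := by
    rcases eq_or_ne ε ⊤ with rfl | htop
    · exact ⟨1, one_pos, le_top⟩
    · exact ⟨ε.toReal, ENNReal.toReal_pos hε.ne' htop,
        by rw [ENNReal.ofReal_toReal htop]⟩
  obtain ⟨N, hN⟩ := eventually_atTop.mp (h r hr0)
  exact ⟨N, fun n hn => (hN n hn).trans hrε⟩

end AuxLemmas

/-- Raikov-type theorem: for a triangular array of independent mean-zero random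
vectors with covariance sums converging to a positive definite `S` and satisfying
the Lindeberg condition, the (unnormalized) empirical covariance matrix
`∑ᵢ (Zᵢ − Z̄)ᵀ(Zᵢ − Z̄)` converges in probability (entrywise) to `S`. -/
theorem empirical_covariance_tendsto_in_measure
    {Ω : Type*} [MeasurableSpace Ω] (P : Measure Ω) [IsProbabilityMeasure P]
    {d : ℕ} (Z : (n : ℕ) → Fin n → Ω → (Fin d → ℝ))
    (hmeas : ∀ n (i : Fin n), Measurable (Z n i))
    (hindep : ∀ n, iIndepFun (Z n) P)
    (hmean : ∀ n (i : Fin n) (j : Fin d), ∫ ω, Z n i ω j ∂P = 0)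
    (hL2 : ∀ n (i : Fin n) (j : Fin d), MemLp (fun ω => Z n i ω j) 2 P)
    (S : Matrix (Fin d) (Fin d) ℝ) (hS : S.PosDef)
    (hcov : ∀ j k : Fin d,
      Tendsto (fun n => ∑ i : Fin n, ∫ ω, Z n i ω j * Z n i ω k ∂P) atTop (nhds (S j k)))
    (hlind : ∀ μ : ℝ, 0 < μ → Tendsto (fun n => ∑ i : Fin n,
      ∫ ω in {ω | μ ≤ Real.sqrt (∑ j, (Z n i ω j) ^ 2)}, (∑ j, (Z n i ω j) ^ 2) ∂P)
      atTop (nhds 0)) :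
    ∀ j k : Fin d, TendstoInMeasure P
      (fun n ω => ∑ i : Fin n,
        (Z n i ω j - (∑ i' : Fin n, Z n i' ω j) / n) *
        (Z n i ω k - (∑ i' : Fin n, Z n i' ω k) / n))
      atTop (fun _ => S j k) := by
  intro j k
  classical
  -- basic measurability / integrability facts
  have hZm : ∀ (n : ℕ) (i : Fin n) (j' : Fin d), Measurable fun ω => Z n i ω j' :=
    fun n i j' => (measurable_pi_apply j').comp (hmeas n i)
  have hQint : ∀ (n : ℕ) (i : Fin n), Integrable (fun ω => auxQ (Z n i ω)) P := by
    intro n i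
    have : (fun ω => auxQ (Z n i ω)) = fun ω => ∑ j' : Fin d, (Z n i ω j') ^ 2 := rfl
    rw [this]
    exact integrable_finset_sum _ fun j' _ => (hL2 n i j').integrable_sq
  have hQm : ∀ (n : ℕ) (i : Fin n), Measurable (fun ω => auxQ (Z n i ω)) :=
    fun n i => measurable_auxQ.comp (hmeas n i)
  have hZZint : ∀ (n : ℕ) (i : Fin n) (j' k' : Fin d),
      Integrable (fun ω => Z n i ω j' * Z n i ω k') P :=
    fun n i j' k' => aux_integrable_mul (hL2 n i j') (hL2 n i k')
  -- a uniform bound on the sums of second moments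
  have hQtend : Tendsto (fun n => ∑ i : Fin n, ∫ ω, auxQ (Z n i ω) ∂P) atTop
      (nhds (∑ j' : Fin d, S j' j')) := by
    have heq : ∀ n : ℕ, ∑ i : Fin n, ∫ ω, auxQ (Z n i ω) ∂P
        = ∑ j' : Fin d, ∑ i : Fin n, ∫ ω, Z n i ω j' * Z n i ω j' ∂P := by
      intro n
      have hi : ∀ i : Fin n, ∫ ω, auxQ (Z n i ω) ∂P
          = ∑ j' : Fin d, ∫ ω, Z n i ω j' * Z n i ω j' ∂P := by
        intro i
        have : (fun ω => auxQ (Z n i ω)) = fun ω => ∑ j' : Fin d, (Z n i ω j') ^ 2 := rfl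
        rw [this, integral_finset_sum _ fun j' _ => (hL2 n i j').integrable_sq]
        exact Finset.sum_congr rfl fun j' _ => by simp [sq]
      rw [Finset.sum_congr rfl fun i _ => hi i, Finset.sum_comm]
    exact (tendsto_finset_sum _ fun j' _ => hcov j' j').congr fun n => (heq n).symm
  obtain ⟨C₀, hC₀⟩ := hQtend.bddAbove_range
  set C : ℝ := max C₀ 1 with hCdef
  have hCpos : (0 : ℝ) < C := lt_of_lt_of_le one_pos (le_max_right _ _)
  have hQC : ∀ n : ℕ, ∑ i : Fin n, ∫ ω, auxQ (Z n i ω) ∂P ≤ C :=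
    fun n => le_trans (hC₀ (Set.mem_range_self n)) (le_max_left _ _)
  -- second moment of coordinate sums
  have hsum_mem : ∀ (j' : Fin d) (n : ℕ), MemLp (fun ω => ∑ i : Fin n, Z n i ω j') 2 P :=
    fun j' n => memLp_finsetSum Finset.univ fun i _ => hL2 n i j'
  have hZsqint : ∀ (n : ℕ) (i : Fin n) (j' : Fin d),
      ∫ ω, (Z n i ω j') ^ 2 ∂P ≤ ∫ ω, auxQ (Z n i ω) ∂P :=
    fun n i j' => integral_mono (hL2 n i j').integrable_sq (hQint n i)
      fun ω => sq_le_auxQ (Z n i ω) j'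
  have hEsq : ∀ (j' : Fin d) (n : ℕ), ∫ ω, (∑ i : Fin n, Z n i ω j') ^ 2 ∂P ≤ C := by
    intro j' n
    have hmem : ∀ i ∈ Finset.univ, MemLp (fun ω => Z n i ω j') 2 P := fun i _ => hL2 n i j'
    have hpair : Set.Pairwise ↑(Finset.univ : Finset (Fin n))
        fun i i' => IndepFun (fun ω => Z n i ω j') (fun ω => Z n i' ω j') P := by
      intro i _ i' _ hne
      exact ((hindep n).indepFun hne).comp (measurable_pi_apply j') (measurable_pi_apply j')
    have hvar := IndepFun.variance_sum (μ := P) hmem hpair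
    have hmean0 : ∫ ω, (∑ i : Fin n, Z n i ω j') ∂P = 0 := by
      rw [integral_finset_sum _ fun i _ => (hL2 n i j').integrable one_le_two]
      simp [hmean n _ j']
    have hsum_eq : (∑ i : Fin n, fun ω => Z n i ω j') = fun ω => ∑ i : Fin n, Z n i ω j' := by
      funext ω; simp
    have hv2 := variance_eq_sub (μ := P) (hsum_mem j' n)
    have hvi : ∀ i : Fin n, variance (fun ω => Z n i ω j') P = ∫ ω, (Z n i ω j') ^ 2 ∂P := by
      intro i
      have := variance_eq_sub (μ := P) (hL2 n i j')
      simpa [Pi.pow_apply, hmean n i j'] using this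
    have key : ∫ ω, (∑ i : Fin n, Z n i ω j') ^ 2 ∂P
        = ∑ i : Fin n, ∫ ω, (Z n i ω j') ^ 2 ∂P := by
      have h1 : variance (fun ω => ∑ i : Fin n, Z n i ω j') P
          = ∫ ω, (∑ i : Fin n, Z n i ω j') ^ 2 ∂P := by
        rw [hv2]
        simp [Pi.pow_apply, hmean0]
      rw [← h1, ← hsum_eq, hvar]
      exact Finset.sum_congr rfl fun i _ => hvi i
    rw [key]
    calc ∑ i : Fin n, ∫ ω, (Z n i ω j') ^ 2 ∂P
        ≤ ∑ i : Fin n, ∫ ω, auxQ (Z n i ω) ∂P := Finset.sum_le_sum fun i _ => hZsqint n i j'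
      _ ≤ C := hQC n
  -- Step B: the cross term tends to zero in probability
  have hB : TendstoInMeasure P
      (fun n ω => (∑ i : Fin n, Z n i ω j) * (∑ i : Fin n, Z n i ω k) / n) atTop
      (fun _ => (0 : ℝ)) := by
    rw [tendstoInMeasure_iff_dist]
    intro ε hε
    have hupper : ∀ n : ℕ, 1 ≤ n →
        P {ω | ε ≤ dist ((∑ i : Fin n, Z n i ω j) * (∑ i : Fin n, Z n i ω k) / n) 0}
          ≤ ENNReal.ofReal ((2 * C) / (2 * n * ε)) := by
      intro n hn
      have hn' : (0 : ℝ) < n := by exact_mod_cast hn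
      have hg_int : Integrable
          (fun ω => (∑ i : Fin n, Z n i ω j) ^ 2 + (∑ i : Fin n, Z n i ω k) ^ 2) P :=
        (hsum_mem j n).integrable_sq.add (hsum_mem k n).integrable_sq
      have hgnn : ∀ ω, 0 ≤ (∑ i : Fin n, Z n i ω j) ^ 2 + (∑ i : Fin n, Z n i ω k) ^ 2 :=
        fun ω => by positivity
      have hsubset : {ω | ε ≤ dist ((∑ i : Fin n, Z n i ω j) * (∑ i : Fin n, Z n i ω k) / n) 0}
          ⊆ {ω | 2 * n * ε ≤ (∑ i : Fin n, Z n i ω j) ^ 2 + (∑ i : Fin n, Z n i ω k) ^ 2} := by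
        intro ω hω
        simp only [Set.mem_setOf_eq, Real.dist_eq, sub_zero] at hω ⊢
        set a := ∑ i : Fin n, Z n i ω j
        set b := ∑ i : Fin n, Z n i ω k
        rw [abs_div, abs_of_pos hn', le_div_iff₀ hn'] at hω
        have habs : |a * b| ≤ (a ^ 2 + b ^ 2) / 2 := by
          rw [abs_mul]
          nlinarith [sq_nonneg (|a| - |b|), sq_abs a, sq_abs b, abs_nonneg a, abs_nonneg b]
        nlinarith
      calc P {ω | ε ≤ dist ((∑ i : Fin n, Z n i ω j) * (∑ i : Fin n, Z n i ω k) / n) 0}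
          ≤ P {ω | 2 * n * ε ≤ (∑ i : Fin n, Z n i ω j) ^ 2 + (∑ i : Fin n, Z n i ω k) ^ 2} :=
            measure_mono hsubset
        _ ≤ ENNReal.ofReal
            ((∫ ω, ((∑ i : Fin n, Z n i ω j) ^ 2 + (∑ i : Fin n, Z n i ω k) ^ 2) ∂P)
              / (2 * n * ε)) := aux_markov hg_int hgnn (by positivity)
        _ ≤ ENNReal.ofReal ((2 * C) / (2 * n * ε)) := by
            apply ENNReal.ofReal_le_ofReal
            apply div_le_div_of_nonneg_right ?_ (by positivity)
            rw [integral_add (hsum_mem j n).integrable_sq (hsum_mem k n).integrable_sq]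
            have := hEsq j n
            have := hEsq k n
            linarith
    have hlim0 : Tendsto (fun n : ℕ => (2 * C) / (2 * ε) / n) atTop (nhds 0) :=
      tendsto_const_div_atTop_nhds_zero_nat _
    have hlim : Tendsto (fun n : ℕ => ENNReal.ofReal ((2 * C) / (2 * n * ε))) atTop (nhds 0) := by
      have heq : ∀ n : ℕ, (2 * C) / (2 * (n : ℝ) * ε) = (2 * C) / (2 * ε) / n := by
        intro n; rw [div_div]; ring_nf
      simp only [heq]
      simpa using ENNReal.tendsto_ofReal hlim0
    refine tendsto_of_tendsto_of_tendsto_of_le_of_le' tendsto_const_nhds hlim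
      (Eventually.of_forall fun n => zero_le) ?_
    exact eventually_atTop.mpr ⟨1, hupper⟩
  -- Step A: the raw sum of products tends to S j k in probability (Raikov part)
  have hA : TendstoInMeasure P
      (fun n ω => ∑ i : Fin n, Z n i ω j * Z n i ω k) atTop (fun _ => S j k) := by
    rw [tendstoInMeasure_iff_dist]
    intro ε hε
    apply aux_ennreal_tendsto_zero
    intro δ hδ
    set μ0 : ℝ := Real.sqrt (δ * ε ^ 2 / (18 * C)) with hμ0def
    have hμ0pos : 0 < μ0 := Real.sqrt_pos.mpr (by positivity)
    have hμ0sq : μ0 ^ 2 = δ * ε ^ 2 / (18 * C) := Real.sq_sqrt (by positivity)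
    -- properties of W and R applied to Z
    have hWm : ∀ (n : ℕ) (i : Fin n), Measurable (fun ω => auxW μ0 j k (Z n i ω)) :=
      fun n i => (measurable_auxW μ0 j k).comp (hmeas n i)
    have hWmem : ∀ (n : ℕ) (i : Fin n), MemLp (fun ω => auxW μ0 j k (Z n i ω)) 2 P := by
      intro n i
      refine (memLp_top_of_bound (hWm n i).aestronglyMeasurable (μ0 ^ 2)
        (Eventually.of_forall fun ω => ?_)).mono_exponent le_top
      rw [Real.norm_eq_abs]
      exact abs_auxW_le_sq hμ0pos j k (Z n i ω)
    have hWint : ∀ (n : ℕ) (i : Fin n), Integrable (fun ω => auxW μ0 j k (Z n i ω)) P :=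
      fun n i => (hWmem n i).integrable one_le_two
    have hRint : ∀ (n : ℕ) (i : Fin n), Integrable (fun ω => auxR μ0 j k (Z n i ω)) P := by
      intro n i
      have : (fun ω => auxR μ0 j k (Z n i ω))
          = fun ω => Z n i ω j * Z n i ω k - auxW μ0 j k (Z n i ω) := by
        funext ω
        rw [auxW_add_auxR μ0 j k (Z n i ω)]; ring
      rw [this]
      exact (hZZint n i j k).sub (hWint n i)
    -- the tail is controlled by the Lindeberg sum
    have hRabs : ∀ (n : ℕ) (i : Fin n) (ω : Ω), |auxR μ0 j k (Z n i ω)|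
        ≤ Set.indicator {ω' | μ0 ≤ Real.sqrt (auxQ (Z n i ω'))} (fun ω' => auxQ (Z n i ω')) ω := by
      intro n i ω
      by_cases h : μ0 ≤ Real.sqrt (auxQ (Z n i ω))
      · have hmem : ω ∈ {ω' | μ0 ≤ Real.sqrt (auxQ (Z n i ω'))} := h
        rw [Set.indicator_of_mem hmem]
        unfold auxR
        rw [if_pos h]
        exact abs_mul_le_auxQ (Z n i ω) j k
      · have hmem : ω ∉ {ω' | μ0 ≤ Real.sqrt (auxQ (Z n i ω'))} := h
        rw [Set.indicator_of_notMem hmem]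
        unfold auxR
        rw [if_neg h]
        simp
    have hsetm : ∀ (n : ℕ) (i : Fin n),
        MeasurableSet {ω' | μ0 ≤ Real.sqrt (auxQ (Z n i ω'))} :=
      fun n i => measurableSet_le measurable_const
        (Real.continuous_sqrt.measurable.comp (hQm n i))
    have hRsum_le : ∀ n : ℕ, ∑ i : Fin n, ∫ ω, |auxR μ0 j k (Z n i ω)| ∂P
        ≤ ∑ i : Fin n, ∫ ω in {ω' | μ0 ≤ Real.sqrt (auxQ (Z n i ω'))}, auxQ (Z n i ω) ∂P := by
      intro n
      refine Finset.sum_le_sum fun i _ => ?_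
      rw [← integral_indicator (hsetm n i)]
      exact integral_mono (hRint n i).abs ((hQint n i).indicator (hsetm n i)) (hRabs n i)
    -- eventual smallness
    have hlQ : Tendsto (fun n => ∑ i : Fin n,
        ∫ ω in {ω' | μ0 ≤ Real.sqrt (auxQ (Z n i ω'))}, auxQ (Z n i ω) ∂P) atTop (nhds 0) :=
      hlind μ0 hμ0pos
    have hlind_ev : ∀ᶠ n in atTop, (∑ i : Fin n,
        ∫ ω in {ω' | μ0 ≤ Real.sqrt (auxQ (Z n i ω'))}, auxQ (Z n i ω) ∂P) < δ * ε / 12 :=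
      hlQ.eventually (eventually_lt_nhds (by positivity))
    have hcov_ev : ∀ᶠ n in atTop,
        |(∑ i : Fin n, ∫ ω, Z n i ω j * Z n i ω k ∂P) - S j k| < ε / 3 := by
      have := (hcov j k).eventually (Metric.ball_mem_nhds (S j k) (by positivity : (0:ℝ) < ε/3))
      filter_upwards [this] with n hn
      simpa [Real.dist_eq] using hn
    filter_upwards [hlind_ev, hcov_ev] with n hln hcn
    -- now work with fixed n
    set T : Ω → ℝ := fun ω => ∑ i : Fin n, auxW μ0 j k (Z n i ω) with hTdef
    set Rt : Ω → ℝ := fun ω => ∑ i : Fin n, auxR μ0 j k (Z n i ω) with hRtdef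
    have hTmem : MemLp T 2 P := memLp_finsetSum Finset.univ fun i _ => hWmem n i
    have hTint : Integrable T P := integrable_finset_sum _ fun i _ => hWint n i
    have hRtint : Integrable Rt P := integrable_finset_sum _ fun i _ => hRint n i
    have hAeq : ∀ ω, (∑ i : Fin n, Z n i ω j * Z n i ω k) = T ω + Rt ω := by
      intro ω
      rw [hTdef, hRtdef, ← Finset.sum_add_distrib]
      exact Finset.sum_congr rfl fun i _ => auxW_add_auxR μ0 j k (Z n i ω)
    have hsum_int : (∑ i : Fin n, ∫ ω, Z n i ω j * Z n i ω k ∂P)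
        = (∫ ω, T ω ∂P) + ∫ ω, Rt ω ∂P := by
      rw [← integral_finset_sum _ fun i _ => hZZint n i j k, ← integral_add hTint hRtint]
      exact integral_congr_ae (Eventually.of_forall fun ω => hAeq ω)
    -- variance bound for T
    have hvarW : ∀ i : Fin n, variance (fun ω => auxW μ0 j k (Z n i ω)) P
        ≤ μ0 ^ 2 * ∫ ω, auxQ (Z n i ω) ∂P := by
      intro i
      have h1 : variance (fun ω => auxW μ0 j k (Z n i ω)) P
          ≤ ∫ ω, (auxW μ0 j k (Z n i ω)) ^ 2 ∂P := by
        have := variance_le_expectation_sq (μ := P) (hWm n i).aestronglyMeasurable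
        simpa using this
      refine h1.trans ?_
      have h2 : ∀ ω, (auxW μ0 j k (Z n i ω)) ^ 2 ≤ μ0 ^ 2 * auxQ (Z n i ω) := by
        intro ω
        have h3 := abs_auxW_le_sq hμ0pos j k (Z n i ω)
        have h4 := abs_auxW_le_auxQ μ0 j k (Z n i ω)
        have h5 := abs_nonneg (auxW μ0 j k (Z n i ω))
        calc (auxW μ0 j k (Z n i ω)) ^ 2
            = |auxW μ0 j k (Z n i ω)| * |auxW μ0 j k (Z n i ω)| := by
              rw [← sq_abs]; ring
          _ ≤ μ0 ^ 2 * auxQ (Z n i ω) := mul_le_mul h3 h4 h5 (by positivity)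
      calc ∫ ω, (auxW μ0 j k (Z n i ω)) ^ 2 ∂P
          ≤ ∫ ω, μ0 ^ 2 * auxQ (Z n i ω) ∂P :=
            integral_mono (hWmem n i).integrable_sq ((hQint n i).const_mul _) h2
        _ = μ0 ^ 2 * ∫ ω, auxQ (Z n i ω) ∂P := integral_const_mul _ _
    have hvarT : variance T P ≤ μ0 ^ 2 * C := by
      have hpair : Set.Pairwise ↑(Finset.univ : Finset (Fin n))
          fun i i' => IndepFun (fun ω => auxW μ0 j k (Z n i ω))
            (fun ω => auxW μ0 j k (Z n i' ω)) P := by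
        intro i _ i' _ hne
        exact ((hindep n).indepFun hne).comp (measurable_auxW μ0 j k) (measurable_auxW μ0 j k)
      have hvs := IndepFun.variance_sum (μ := P) (fun i _ => hWmem n i) hpair
      have hsum_eq : (∑ i : Fin n, fun ω => auxW μ0 j k (Z n i ω)) = T := by
        funext ω; simp [hTdef]
      calc variance T P = ∑ i : Fin n, variance (fun ω => auxW μ0 j k (Z n i ω)) P := by
            rw [← hsum_eq, hvs]
        _ ≤ ∑ i : Fin n, μ0 ^ 2 * ∫ ω, auxQ (Z n i ω) ∂P :=
            Finset.sum_le_sum fun i _ => hvarW i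
        _ = μ0 ^ 2 * ∑ i : Fin n, ∫ ω, auxQ (Z n i ω) ∂P := by rw [Finset.mul_sum]
        _ ≤ μ0 ^ 2 * C := mul_le_mul_of_nonneg_left (hQC n) (by positivity)
    -- Chebyshev for T
    have hcheb : P {ω | ε / 3 ≤ |T ω - ∫ x, T x ∂P|} ≤ ENNReal.ofReal (δ / 2) := by
      refine (meas_ge_le_variance_div_sq (μ := P) hTmem
        (show (0:ℝ) < ε / 3 by positivity)).trans (ENNReal.ofReal_le_ofReal ?_)
      have heq : μ0 ^ 2 * C / (ε / 3) ^ 2 = δ / 2 := by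
        rw [hμ0sq]; field_simp; ring
      calc variance T P / (ε / 3) ^ 2 ≤ μ0 ^ 2 * C / (ε / 3) ^ 2 := by gcongr
        _ = δ / 2 := heq
    -- Markov for Rt
    have hRtabs_le : ∫ ω, |Rt ω| ∂P ≤ ∑ i : Fin n, ∫ ω, |auxR μ0 j k (Z n i ω)| ∂P := by
      rw [← integral_finset_sum _ fun i _ => (hRint n i).abs]
      refine integral_mono hRtint.abs (integrable_finset_sum _ fun i _ => (hRint n i).abs) ?_
      intro ω
      rw [hRtdef]
      exact Finset.abs_sum_le_sum_abs _ _
    have hmark : P {ω | ε / 3 ≤ |Rt ω - ∫ x, Rt x ∂P|} ≤ ENNReal.ofReal (δ / 2) := by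
      have hint : Integrable (fun ω => |Rt ω - ∫ x, Rt x ∂P|) P :=
        (hRtint.sub (integrable_const _)).abs
      refine (aux_markov hint (fun ω => abs_nonneg _)
        (show (0:ℝ) < ε / 3 by positivity)).trans (ENNReal.ofReal_le_ofReal ?_)
      have hERt : |∫ x, Rt x ∂P| ≤ ∫ ω, |Rt ω| ∂P := by
        simpa [Real.norm_eq_abs] using norm_integral_le_integral_norm (μ := P) Rt
      have h1 : ∫ ω, |Rt ω - ∫ x, Rt x ∂P| ∂P
          ≤ 2 * ∑ i : Fin n, ∫ ω, |auxR μ0 j k (Z n i ω)| ∂P := by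
        have step1 : ∫ ω, |Rt ω - ∫ x, Rt x ∂P| ∂P
            ≤ ∫ ω, (|Rt ω| + |∫ x, Rt x ∂P|) ∂P := by
          refine integral_mono hint (hRtint.abs.add (integrable_const _)) fun ω => ?_
          calc |Rt ω - ∫ x, Rt x ∂P| = |Rt ω + -(∫ x, Rt x ∂P)| := by ring_nf
            _ ≤ |Rt ω| + |-(∫ x, Rt x ∂P)| := abs_add_le _ _
            _ = |Rt ω| + |∫ x, Rt x ∂P| := by rw [abs_neg]
        have step2 : ∫ ω, (|Rt ω| + |∫ x, Rt x ∂P|) ∂P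
            = (∫ ω, |Rt ω| ∂P) + |∫ x, Rt x ∂P| := by
          rw [integral_add hRtint.abs (integrable_const _)]
          simp
        have := hRtabs_le
        linarith [step1, step2, hERt]
      have h2 : ∑ i : Fin n, ∫ ω, |auxR μ0 j k (Z n i ω)| ∂P < δ * ε / 12 :=
        lt_of_le_of_lt (hRsum_le n) hln
      have heq : 2 * (δ * ε / 12) / (ε / 3) = δ / 2 := by field_simp; ring
      calc (∫ ω, |Rt ω - ∫ x, Rt x ∂P| ∂P) / (ε / 3)
          ≤ (2 * (δ * ε / 12)) / (ε / 3) := by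
            apply div_le_div_of_nonneg_right ?_ (by positivity)
            linarith
        _ = δ / 2 := heq
    -- combine
    have hsubset : {ω | ε ≤ dist (∑ i : Fin n, Z n i ω j * Z n i ω k) (S j k)}
        ⊆ {ω | ε / 3 ≤ |T ω - ∫ x, T x ∂P|} ∪ {ω | ε / 3 ≤ |Rt ω - ∫ x, Rt x ∂P|} := by
      intro ω hω
      simp only [Set.mem_setOf_eq, Set.mem_union, Real.dist_eq] at hω ⊢
      by_contra hc
      push_neg at hc
      obtain ⟨hc1, hc2⟩ := hc
      have key : (∑ i : Fin n, Z n i ω j * Z n i ω k) - S j k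
          = (T ω - ∫ x, T x ∂P) + (Rt ω - ∫ x, Rt x ∂P)
            + ((∑ i : Fin n, ∫ ω', Z n i ω' j * Z n i ω' k ∂P) - S j k) := by
        rw [hAeq ω, hsum_int]; ring
      have htri : |(∑ i : Fin n, Z n i ω j * Z n i ω k) - S j k|
          ≤ |T ω - ∫ x, T x ∂P| + |Rt ω - ∫ x, Rt x ∂P|
            + |(∑ i : Fin n, ∫ ω', Z n i ω' j * Z n i ω' k ∂P) - S j k| := by
        rw [key]
        exact (abs_add_le _ _).trans (add_le_add_left (abs_add_le _ _) _)
      linarith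
    calc P {ω | ε ≤ dist (∑ i : Fin n, Z n i ω j * Z n i ω k) (S j k)}
        ≤ P ({ω | ε / 3 ≤ |T ω - ∫ x, T x ∂P|} ∪ {ω | ε / 3 ≤ |Rt ω - ∫ x, Rt x ∂P|}) :=
          measure_mono hsubset
      _ ≤ P {ω | ε / 3 ≤ |T ω - ∫ x, T x ∂P|} + P {ω | ε / 3 ≤ |Rt ω - ∫ x, Rt x ∂P|} :=
          measure_union_le _ _
      _ ≤ ENNReal.ofReal (δ / 2) + ENNReal.ofReal (δ / 2) := add_le_add hcheb hmark
      _ = ENNReal.ofReal δ := by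
          rw [← ENNReal.ofReal_add (by positivity) (by positivity)]
          norm_num
  -- combine the two steps
  have hcomb := aux_tim_sub hA hB
  refine hcomb.congr (fun n => Eventually.of_forall fun ω => ?_) EventuallyEq.rfl
  exact (aux_sum_expand n (fun i => Z n i ω j) (fun i => Z n i ω k)).symm
end

section
/- Let {Z_i(n)} be a triangular array of independent mean-zero random vectors in R^d with finite covariances, satisfying the Lindeberg condition and Σ_{i=1}^n Cov Z_i(n) → I_d. Then for any two distinct coordinates j ≠ k, Σ_{i=1}^n Z_i^{(j)}(n) Z_i^{(k)}(n) → 0 in probability as n → ∞. -/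
open MeasureTheory ProbabilityTheory Filter Matrix
open scoped Topology
open scoped BigOperators

noncomputable def crossTrunc {d : ℕ} (t : ℝ) (j k : Fin d) (v : Fin d → ℝ) : ℝ :=
  if t ≤ Real.sqrt (∑ m, v m ^ 2) then 0 else v j * v k

noncomputable def crossTail {d : ℕ} (t : ℝ) (j k : Fin d) (v : Fin d → ℝ) : ℝ :=
  if t ≤ Real.sqrt (∑ m, v m ^ 2) then v j * v k else 0

lemma integrable_mul_of_memL2 {Ω : Type*} [MeasurableSpace Ω] {P : Measure Ω}
    {f g : Ω → ℝ} (hf : MemLp f 2 P) (hg : MemLp g 2 P) :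
    Integrable (fun ω => f ω * g ω) P := by
  refine Integrable.mono' (hf.integrable_sq.add hg.integrable_sq)
    (hf.aestronglyMeasurable.mul hg.aestronglyMeasurable)
    (Filter.Eventually.of_forall fun ω => ?_)
  simp only [Pi.add_apply]
  rw [Real.norm_eq_abs, abs_mul]
  nlinarith [sq_nonneg (|f ω| - |g ω|), sq_abs (f ω), sq_abs (g ω),
    abs_nonneg (f ω), abs_nonneg (g ω)]

lemma sumsq_nonneg {d : ℕ} (v : Fin d → ℝ) : 0 ≤ ∑ m, v m ^ 2 :=
  Finset.sum_nonneg fun _ _ => sq_nonneg _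

lemma abs_cross_le_sumsq {d : ℕ} {j k : Fin d} (hjk : j ≠ k) (v : Fin d → ℝ) :
    |v j * v k| ≤ ∑ m, v m ^ 2 := by
  have hsub : v j ^ 2 + v k ^ 2 ≤ ∑ m, v m ^ 2 := by
    have h := Finset.sum_le_sum_of_subset_of_nonneg
      (Finset.subset_univ ({j, k} : Finset (Fin d)))
      (fun m _ _ => sq_nonneg (v m))
    simpa [Finset.sum_pair hjk] using h
  have h1 : |v j * v k| = |v j| * |v k| := abs_mul _ _
  nlinarith [sq_nonneg (|v j| - |v k|), sq_abs (v j), sq_abs (v k),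
    abs_nonneg (v j), abs_nonneg (v k)]

lemma crossTrunc_measurable {d : ℕ} (t : ℝ) (j k : Fin d) :
    Measurable (crossTrunc t j k) := by
  refine Measurable.ite ?_ measurable_const
    ((measurable_pi_apply j).mul (measurable_pi_apply k))
  exact measurableSet_le measurable_const
    (Real.continuous_sqrt.measurable.comp
      (Finset.measurable_sum _ fun m _ => (measurable_pi_apply m).pow_const 2))

lemma crossTail_measurable {d : ℕ} (t : ℝ) (j k : Fin d) :
    Measurable (crossTail t j k) := by
  refine Measurable.ite ?_ ((measurable_pi_apply j).mul (measurable_pi_apply k))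
    measurable_const
  exact measurableSet_le measurable_const
    (Real.continuous_sqrt.measurable.comp
      (Finset.measurable_sum _ fun m _ => (measurable_pi_apply m).pow_const 2))

lemma crossTail_add_crossTrunc {d : ℕ} (t : ℝ) (j k : Fin d) (v : Fin d → ℝ) :
    crossTail t j k v + crossTrunc t j k v = v j * v k := by
  unfold crossTail crossTrunc
  by_cases h : t ≤ Real.sqrt (∑ m, v m ^ 2) <;> simp [h]

lemma crossTrunc_abs_le {d : ℕ} {t : ℝ} (ht : 0 < t) {j k : Fin d} (hjk : j ≠ k)
    (v : Fin d → ℝ) : |crossTrunc t j k v| ≤ t ^ 2 := by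
  unfold crossTrunc
  by_cases h : t ≤ Real.sqrt (∑ m, v m ^ 2)
  · simp [h]; positivity
  · rw [if_neg h]
    push_neg at h
    have h2 : (∑ m, v m ^ 2) < t ^ 2 := Real.lt_sq_of_sqrt_lt h
    exact le_of_lt (lt_of_le_of_lt (abs_cross_le_sumsq hjk v) h2)

lemma crossTrunc_sq_le {d : ℕ} {t : ℝ} (ht : 0 < t) {j k : Fin d} (hjk : j ≠ k)
    (v : Fin d → ℝ) : crossTrunc t j k v ^ 2 ≤ t ^ 2 * |v j * v k| := by
  unfold crossTrunc
  by_cases h : t ≤ Real.sqrt (∑ m, v m ^ 2)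
  · rw [if_pos h]
    have : (0:ℝ)^2 = 0 := by norm_num
    rw [this]; positivity
  · rw [if_neg h]
    push_neg at h
    have h2 : (∑ m, v m ^ 2) < t ^ 2 := Real.lt_sq_of_sqrt_lt h
    have h3 : |v j * v k| ≤ ∑ m, v m ^ 2 := abs_cross_le_sumsq hjk v
    have h4 : 0 ≤ |v j * v k| := abs_nonneg _
    nlinarith [sq_abs (v j * v k)]

lemma crossTail_abs_le {d : ℕ} (t : ℝ) {j k : Fin d} (hjk : j ≠ k) (v : Fin d → ℝ) :
    |crossTail t j k v| ≤
      (if t ≤ Real.sqrt (∑ m, v m ^ 2) then (∑ m, v m ^ 2) else 0) := by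
  unfold crossTail
  by_cases h : t ≤ Real.sqrt (∑ m, v m ^ 2)
  · rw [if_pos h, if_pos h]; exact abs_cross_le_sumsq hjk v
  · simp [h]

/-- For a triangular array of independent mean-zero random vectors satisfying
the Lindeberg condition with `∑ᵢ Cov Zᵢ(n) → I_d`, the cross-products sums
`∑ᵢ Zᵢ⁽ʲ⁾(n) Zᵢ⁽ᵏ⁾(n)` converge to `0` in probability for `j ≠ k`. -/
theorem cross_products_tendsto_zero_in_measure
    {Ω : Type*} [MeasurableSpace Ω] (P : Measure Ω) [IsProbabilityMeasure P]
    {d : ℕ} (Z : (n : ℕ) → Fin n → Ω → (Fin d → ℝ))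
    (hmeas : ∀ n (i : Fin n), Measurable (Z n i))
    (hindep : ∀ n, iIndepFun (Z n) P)
    (hmean : ∀ n (i : Fin n) (j : Fin d), ∫ ω, Z n i ω j ∂P = 0)
    (hL2 : ∀ n (i : Fin n) (j : Fin d), MemLp (fun ω => Z n i ω j) 2 P)
    (hcov : ∀ j k : Fin d,
      Tendsto (fun n => ∑ i : Fin n, ∫ ω, Z n i ω j * Z n i ω k ∂P) atTop
        (nhds ((1 : Matrix (Fin d) (Fin d) ℝ) j k)))
    (hlind : ∀ μ : ℝ, 0 < μ → Tendsto (fun n => ∑ i : Fin n,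
      ∫ ω in {ω | μ ≤ Real.sqrt (∑ j, (Z n i ω j) ^ 2)}, (∑ j, (Z n i ω j) ^ 2) ∂P)
      atTop (nhds 0)) :
    ∀ j k : Fin d, j ≠ k → TendstoInMeasure P
      (fun n ω => ∑ i : Fin n, Z n i ω j * Z n i ω k) atTop (fun _ => (0 : ℝ)) := by
  classical
  intro j k hjk
  rw [tendstoInMeasure_iff_dist]
  intro ε hε
  set c : ℝ := ε / 3 with hc
  have hcpos : 0 < c := by positivity
  -- basic integrability facts
  have hXint : ∀ n (i : Fin n), Integrable (fun ω => Z n i ω j * Z n i ω k) P :=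
    fun n i => integrable_mul_of_memL2 (hL2 n i j) (hL2 n i k)
  have hQint : ∀ n (i : Fin n), Integrable (fun ω => ∑ m, Z n i ω m ^ 2) P :=
    fun n i => integrable_finset_sum _ fun m _ => (hL2 n i m).integrable_sq
  -- diagonal covariances tend to 1, so the sum of second moments tends to d
  have hdiag : ∀ m : Fin d,
      Tendsto (fun n => ∑ i : Fin n, ∫ ω, Z n i ω m ^ 2 ∂P) atTop (𝓝 1) := by
    intro m
    have h := hcov m m
    rw [Matrix.one_apply_eq] at h
    convert h using 2 with n
    refine Finset.sum_congr rfl fun i _ => ?_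
    congr 1
    ext ω
    ring
  have hsum2 : Tendsto (fun n => ∑ i : Fin n, ∫ ω, (∑ m, Z n i ω m ^ 2) ∂P)
      atTop (𝓝 (d : ℝ)) := by
    have heq : ∀ n : ℕ, (∑ i : Fin n, ∫ ω, (∑ m, Z n i ω m ^ 2) ∂P)
        = ∑ m : Fin d, ∑ i : Fin n, ∫ ω, Z n i ω m ^ 2 ∂P := by
      intro n
      calc (∑ i : Fin n, ∫ ω, (∑ m, Z n i ω m ^ 2) ∂P)
          = ∑ i : Fin n, ∑ m : Fin d, ∫ ω, Z n i ω m ^ 2 ∂P :=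
            Finset.sum_congr rfl fun i _ =>
              integral_finset_sum _ fun m _ => (hL2 n i m).integrable_sq
        _ = ∑ m : Fin d, ∑ i : Fin n, ∫ ω, Z n i ω m ^ 2 ∂P := Finset.sum_comm
    simp only [heq]
    have h := tendsto_finset_sum (Finset.univ : Finset (Fin d)) fun m _ => hdiag m
    simpa using h
  have hES : Tendsto (fun n => ∑ i : Fin n, ∫ ω, Z n i ω j * Z n i ω k ∂P) atTop (𝓝 0) := by
    have h := hcov j k
    rwa [Matrix.one_apply_ne hjk] at h
  rw [ENNReal.tendsto_atTop_zero]
  intro δ hδ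
  obtain ⟨ρ, hρpos, hρle⟩ : ∃ ρ : ℝ, 0 < ρ ∧ ENNReal.ofReal ρ ≤ δ / 2 := by
    have hmin_pos : 0 < min 1 (δ / 2) :=
      lt_min one_pos (ENNReal.half_pos hδ.ne')
    have hmin_ne_top : min 1 (δ / 2) ≠ ⊤ :=
      (lt_of_le_of_lt (min_le_left _ _) ENNReal.one_lt_top).ne
    refine ⟨(min 1 (δ / 2)).toReal, ENNReal.toReal_pos hmin_pos.ne' hmin_ne_top, ?_⟩
    rw [ENNReal.ofReal_toReal hmin_ne_top]
    exact min_le_right _ _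
  set t : ℝ := Real.sqrt (ρ * c ^ 2 / ((d : ℝ) + 1)) with ht
  have htpos : 0 < t := Real.sqrt_pos.2 (by positivity)
  have htsq : t ^ 2 * ((d : ℝ) + 1) / c ^ 2 = ρ := by
    rw [ht, Real.sq_sqrt (by positivity)]
    field_simp
  -- measurability and integrability of truncated/tail parts
  have hYmeas : ∀ n (i : Fin n), Measurable fun ω => crossTrunc t j k (Z n i ω) :=
    fun n i => (crossTrunc_measurable t j k).comp (hmeas n i)
  have hYL2 : ∀ n (i : Fin n), MemLp (fun ω => crossTrunc t j k (Z n i ω)) 2 P :=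
    fun n i => MemLp.of_bound (hYmeas n i).aestronglyMeasurable (t ^ 2)
      (Eventually.of_forall fun ω => by
        rw [Real.norm_eq_abs]; exact crossTrunc_abs_le htpos hjk (Z n i ω))
  have hYint : ∀ n (i : Fin n), Integrable (fun ω => crossTrunc t j k (Z n i ω)) P :=
    fun n i => (hYL2 n i).integrable one_le_two
  have hTint : ∀ n (i : Fin n), Integrable (fun ω => crossTail t j k (Z n i ω)) P := by
    intro n i
    refine ((hXint n i).sub (hYint n i)).congr (Eventually.of_forall fun ω => ?_)
    have h := crossTail_add_crossTrunc t j k (Z n i ω)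
    simp only [Pi.sub_apply]
    linarith
  have hTnint : ∀ n, Integrable (fun ω => ∑ i : Fin n, crossTail t j k (Z n i ω)) P :=
    fun n => integrable_finset_sum _ fun i _ => hTint n i
  have hUnint : ∀ n, Integrable (fun ω => ∑ i : Fin n, crossTrunc t j k (Z n i ω)) P :=
    fun n => integrable_finset_sum _ fun i _ => hYint n i
  have hAmeas : ∀ n (i : Fin n), MeasurableSet {ω | t ≤ Real.sqrt (∑ m, Z n i ω m ^ 2)} :=
    fun n i => measurableSet_le measurable_const
      (Real.continuous_sqrt.measurable.comp
        (Finset.measurable_sum _ fun m _ =>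
          ((measurable_pi_apply m).comp (hmeas n i)).pow_const 2))
  have hL := hlind t htpos
  -- L¹ bound for the tail sum
  have hTabs : ∀ n, (∫ ω, |∑ i : Fin n, crossTail t j k (Z n i ω)| ∂P)
      ≤ ∑ i : Fin n,
        ∫ ω in {ω | t ≤ Real.sqrt (∑ m, Z n i ω m ^ 2)}, (∑ m, Z n i ω m ^ 2) ∂P := by
    intro n
    have h1 : (∫ ω, |∑ i : Fin n, crossTail t j k (Z n i ω)| ∂P)
        ≤ ∫ ω, ∑ i : Fin n, |crossTail t j k (Z n i ω)| ∂P :=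
      integral_mono (hTnint n).abs (integrable_finset_sum _ fun i _ => (hTint n i).abs)
        fun ω => Finset.abs_sum_le_sum_abs _ _
    rw [integral_finset_sum _ fun i _ => (hTint n i).abs] at h1
    refine h1.trans (Finset.sum_le_sum fun i _ => ?_)
    have h2 : (∫ ω, |crossTail t j k (Z n i ω)| ∂P)
        ≤ ∫ ω, Set.indicator {ω | t ≤ Real.sqrt (∑ m, Z n i ω m ^ 2)}
            (fun ω => ∑ m, Z n i ω m ^ 2) ω ∂P := by
      refine integral_mono (hTint n i).abs ((hQint n i).indicator (hAmeas n i)) fun ω => ?_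
      have h := crossTail_abs_le t hjk (Z n i ω)
      simpa [Set.indicator_apply] using h
    rwa [integral_indicator (hAmeas n i)] at h2
  -- Markov bound for tail
  have hMarkov : ∀ n, P {ω | c ≤ |∑ i : Fin n, crossTail t j k (Z n i ω)|}
      ≤ ENNReal.ofReal ((∑ i : Fin n,
        ∫ ω in {ω | t ≤ Real.sqrt (∑ m, Z n i ω m ^ 2)}, (∑ m, Z n i ω m ^ 2) ∂P) / c) := by
    intro n
    have h1 := mul_meas_ge_le_integral_of_nonneg (μ := P)
      (f := fun ω => |∑ i : Fin n, crossTail t j k (Z n i ω)|)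
      (Eventually.of_forall fun ω => abs_nonneg _) (hTnint n).abs c
    have h2 : (P {ω | c ≤ |∑ i : Fin n, crossTail t j k (Z n i ω)|}).toReal
        ≤ (∑ i : Fin n,
          ∫ ω in {ω | t ≤ Real.sqrt (∑ m, Z n i ω m ^ 2)}, (∑ m, Z n i ω m ^ 2) ∂P) / c := by
      rw [le_div_iff₀ hcpos]
      calc (P {ω | c ≤ |∑ i : Fin n, crossTail t j k (Z n i ω)|}).toReal * c
          = c * (P {ω | c ≤ |∑ i : Fin n, crossTail t j k (Z n i ω)|}).toReal := mul_comm _ _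
        _ ≤ ∫ ω, |∑ i : Fin n, crossTail t j k (Z n i ω)| ∂P := h1
        _ ≤ _ := hTabs n
    calc P {ω | c ≤ |∑ i : Fin n, crossTail t j k (Z n i ω)|}
        = ENNReal.ofReal
            (P {ω | c ≤ |∑ i : Fin n, crossTail t j k (Z n i ω)|}).toReal :=
          (ENNReal.ofReal_toReal (measure_ne_top P _)).symm
      _ ≤ _ := ENNReal.ofReal_le_ofReal h2
  have hMar0 : Tendsto (fun n => ENNReal.ofReal ((∑ i : Fin n,
      ∫ ω in {ω | t ≤ Real.sqrt (∑ m, Z n i ω m ^ 2)}, (∑ m, Z n i ω m ^ 2) ∂P) / c))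
      atTop (𝓝 0) := by
    have h := ENNReal.tendsto_ofReal (hL.div_const c)
    simpa using h
  have hMarkovEv : ∀ᶠ n in atTop,
      P {ω | c ≤ |∑ i : Fin n, crossTail t j k (Z n i ω)|} ≤ δ / 2 := by
    have hlt := hMar0.eventually_le_const (ENNReal.half_pos hδ.ne')
    filter_upwards [hlt] with n hn
    exact (hMarkov n).trans hn
  -- variance bounds for the truncated sum
  have hVari : ∀ n (i : Fin n), variance (fun ω => crossTrunc t j k (Z n i ω)) P
      ≤ t ^ 2 * ∫ ω, |Z n i ω j * Z n i ω k| ∂P := by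
    intro n i
    refine (variance_le_expectation_sq (hYmeas n i).aestronglyMeasurable).trans ?_
    have h1 : (∫ ω, crossTrunc t j k (Z n i ω) ^ 2 ∂P)
        ≤ ∫ ω, t ^ 2 * |Z n i ω j * Z n i ω k| ∂P := by
      refine integral_mono ((hYL2 n i).integrable_sq) (((hXint n i).abs).const_mul _)
        fun ω => crossTrunc_sq_le htpos hjk (Z n i ω)
    rw [integral_const_mul] at h1
    exact h1
  have hVarsum : ∀ n, variance (fun ω => ∑ i : Fin n, crossTrunc t j k (Z n i ω)) P
      = ∑ i : Fin n, variance (fun ω => crossTrunc t j k (Z n i ω)) P := by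
    intro n
    have hfun : (fun ω => ∑ i : Fin n, crossTrunc t j k (Z n i ω))
        = ∑ i : Fin n, (fun ω => crossTrunc t j k (Z n i ω)) := by
      ext ω; simp
    rw [hfun]
    refine IndepFun.variance_sum (fun i _ => hYL2 n i) ?_
    intro i _ i' _ hne
    exact ((hindep n).comp (fun _ => crossTrunc t j k)
      (fun _ => crossTrunc_measurable t j k)).indepFun hne
  have hEbound : ∀ᶠ n in atTop,
      (∑ i : Fin n, ∫ ω, (∑ m, Z n i ω m ^ 2) ∂P) ≤ (d : ℝ) + 1 :=
    hsum2.eventually_le_const (lt_add_one _)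
  have hVarbound : ∀ᶠ n in atTop,
      variance (fun ω => ∑ i : Fin n, crossTrunc t j k (Z n i ω)) P
        ≤ t ^ 2 * ((d : ℝ) + 1) := by
    filter_upwards [hEbound] with n hn
    calc variance (fun ω => ∑ i : Fin n, crossTrunc t j k (Z n i ω)) P
        = ∑ i : Fin n, variance (fun ω => crossTrunc t j k (Z n i ω)) P := hVarsum n
      _ ≤ ∑ i : Fin n, t ^ 2 * ∫ ω, |Z n i ω j * Z n i ω k| ∂P :=
          Finset.sum_le_sum fun i _ => hVari n i
      _ = t ^ 2 * ∑ i : Fin n, ∫ ω, |Z n i ω j * Z n i ω k| ∂P := by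
          rw [Finset.mul_sum]
      _ ≤ t ^ 2 * ∑ i : Fin n, ∫ ω, (∑ m, Z n i ω m ^ 2) ∂P := by
          refine mul_le_mul_of_nonneg_left (Finset.sum_le_sum fun i _ => ?_) (sq_nonneg t)
          exact integral_mono (hXint n i).abs (hQint n i)
            fun ω => abs_cross_le_sumsq hjk (Z n i ω)
      _ ≤ t ^ 2 * ((d : ℝ) + 1) := mul_le_mul_of_nonneg_left hn (sq_nonneg t)
  -- the mean of the truncated sum tends to 0
  have hT0 : Tendsto (fun n => ∫ ω, (∑ i : Fin n, crossTail t j k (Z n i ω)) ∂P)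
      atTop (𝓝 0) := by
    refine squeeze_zero_norm (fun n => ?_) hL
    calc ‖∫ ω, (∑ i : Fin n, crossTail t j k (Z n i ω)) ∂P‖
        ≤ ∫ ω, ‖∑ i : Fin n, crossTail t j k (Z n i ω)‖ ∂P :=
          norm_integral_le_integral_norm _
      _ = ∫ ω, |∑ i : Fin n, crossTail t j k (Z n i ω)| ∂P := by
          simp [Real.norm_eq_abs]
      _ ≤ _ := hTabs n
  have hUEeq : ∀ n, (∫ ω, (∑ i : Fin n, crossTrunc t j k (Z n i ω)) ∂P)
      = (∑ i : Fin n, ∫ ω, Z n i ω j * Z n i ω k ∂P)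
        - ∫ ω, (∑ i : Fin n, crossTail t j k (Z n i ω)) ∂P := by
    intro n
    rw [eq_sub_iff_add_eq, ← integral_add (hUnint n) (hTnint n),
      ← integral_finset_sum _ fun i _ => hXint n i]
    congr 1
    ext ω
    rw [← Finset.sum_add_distrib]
    refine Finset.sum_congr rfl fun i _ => ?_
    rw [add_comm]
    exact crossTail_add_crossTrunc t j k (Z n i ω)
  have hEU : Tendsto (fun n => ∫ ω, (∑ i : Fin n, crossTrunc t j k (Z n i ω)) ∂P)
      atTop (𝓝 0) := by
    simp only [hUEeq]
    simpa using hES.sub hT0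
  have hEUsmall : ∀ᶠ n in atTop,
      |∫ ω, (∑ i : Fin n, crossTrunc t j k (Z n i ω)) ∂P| ≤ c := by
    have h := hEU.eventually (eventually_abs_sub_lt 0 hcpos)
    filter_upwards [h] with n hn
    rw [sub_zero] at hn
    exact hn.le
  -- Chebyshev bound for the truncated sum
  have hCheb : ∀ᶠ n in atTop,
      P {ω | c ≤ |(∑ i : Fin n, crossTrunc t j k (Z n i ω)) -
          ∫ ω', (∑ i : Fin n, crossTrunc t j k (Z n i ω')) ∂P|} ≤ δ / 2 := by
    filter_upwards [hVarbound] with n hn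
    have h1 := meas_ge_le_variance_div_sq (μ := P)
      (X := fun ω => ∑ i : Fin n, crossTrunc t j k (Z n i ω))
      (memLp_finset_sum _ fun i _ => hYL2 n i) hcpos
    refine le_trans h1 ?_
    refine le_trans (ENNReal.ofReal_le_ofReal ?_) hρle
    rw [← htsq]
    gcongr
  -- final assembly
  have hfinal : ∀ᶠ n in atTop,
      P {ω | ε ≤ dist (∑ i : Fin n, Z n i ω j * Z n i ω k) 0} ≤ δ := by
    filter_upwards [hMarkovEv, hCheb, hEUsmall] with n h1 h2 h3
    have hincl : {ω | ε ≤ dist (∑ i : Fin n, Z n i ω j * Z n i ω k) 0}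
        ⊆ {ω | c ≤ |∑ i : Fin n, crossTail t j k (Z n i ω)|}
          ∪ {ω | c ≤ |(∑ i : Fin n, crossTrunc t j k (Z n i ω)) -
              ∫ ω', (∑ i : Fin n, crossTrunc t j k (Z n i ω')) ∂P|} := by
      intro ω hω
      simp only [Set.mem_setOf_eq, Real.dist_eq, sub_zero] at hω
      by_contra hcon
      simp only [Set.mem_union, Set.mem_setOf_eq, not_or, not_le] at hcon
      obtain ⟨ha, hb⟩ := hcon
      have hsplit : (∑ i : Fin n, Z n i ω j * Z n i ω k)
          = (∑ i : Fin n, crossTail t j k (Z n i ω))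
            + (∑ i : Fin n, crossTrunc t j k (Z n i ω)) := by
        rw [← Finset.sum_add_distrib]
        exact Finset.sum_congr rfl fun i _ =>
          (crossTail_add_crossTrunc t j k (Z n i ω)).symm
      rw [hsplit] at hω
      set a := ∑ i : Fin n, crossTail t j k (Z n i ω) with hadef
      set b := ∑ i : Fin n, crossTrunc t j k (Z n i ω) with hbdef
      set e := ∫ ω', (∑ i : Fin n, crossTrunc t j k (Z n i ω')) ∂P with hedef
      have h4 : |a + b| ≤ |a| + (|b - e| + |e|) := by
        calc |a + b| = |a + ((b - e) + e)| := by ring_nf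
          _ ≤ |a| + |(b - e) + e| := abs_add_le _ _
          _ ≤ |a| + (|b - e| + |e|) := add_le_add_right (abs_add_le _ _) _
      have hεc : ε = c + (c + c) := by rw [hc]; ring
      linarith
    refine le_trans (measure_mono hincl) (le_trans (measure_union_le _ _) ?_)
    calc P {ω | c ≤ |∑ i : Fin n, crossTail t j k (Z n i ω)|}
          + P {ω | c ≤ |(∑ i : Fin n, crossTrunc t j k (Z n i ω)) -
              ∫ ω', (∑ i : Fin n, crossTrunc t j k (Z n i ω')) ∂P|}
        ≤ δ / 2 + δ / 2 := add_le_add h1 h2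
      _ = δ := ENNReal.add_halves δ
  rw [eventually_atTop] at hfinal
  exact hfinal
end

section
/- Let A_n be positive definite nonstochastic d×d matrices and V_n symmetric random d×d matrices. If A_n^{−1/2} V_n A_n^{−T/2} → I_d in probability as n → ∞, then A_n^{T/2} V_n^{−T/2} → I_d in probability, where square roots are Cholesky square roots and V_n^{−T/2} is defined on the event {V_n positive definite}, whose probability tends to one. -/
open MeasureTheory ProbabilityTheory Filter Matrix
open scoped BigOperators

variable {d : ℕ}

/-- lower triangular in the statement's sense. -/
def LowTri (L : Matrix (Fin d) (Fin d) ℝ) : Prop := ∀ i j : Fin d, i < j → L i j = 0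

lemma lowTri_iff_blockTriangular {L : Matrix (Fin d) (Fin d) ℝ} :
    LowTri L ↔ L.BlockTriangular (OrderDual.toDual : Fin d → (Fin d)ᵒᵈ) := by
  constructor
  · intro h i j hij; exact h i j hij
  · intro h i j hij; exact h hij

lemma lowTri_mul {A B : Matrix (Fin d) (Fin d) ℝ} (hA : LowTri A) (hB : LowTri B) :
    LowTri (A * B) :=
  lowTri_iff_blockTriangular.mpr
    ((lowTri_iff_blockTriangular.mp hA).mul (lowTri_iff_blockTriangular.mp hB))

lemma diag_mul_lowTri {A B : Matrix (Fin d) (Fin d) ℝ} (hA : LowTri A) (hB : LowTri B)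
    (i : Fin d) : (A * B) i i = A i i * B i i := by
  rw [Matrix.mul_apply]
  refine Finset.sum_eq_single i (fun k _ hk => ?_) (by simp)
  rcases lt_or_gt_of_ne hk with h | h
  · rw [hB k i h, mul_zero]
  · rw [hA i k h, zero_mul]

lemma lowTri_det {L : Matrix (Fin d) (Fin d) ℝ} (hL : LowTri L) :
    L.det = ∏ i, L i i :=
  Matrix.det_of_lowerTriangular L (lowTri_iff_blockTriangular.mp hL)

lemma lowTri_isUnit_det {L : Matrix (Fin d) (Fin d) ℝ} (hL : LowTri L)
    (hd : ∀ i, 0 < L i i) : IsUnit L.det := by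
  rw [lowTri_det hL]
  exact (Finset.prod_pos (fun i _ => hd i)).ne'.isUnit

lemma lowTri_inv {L : Matrix (Fin d) (Fin d) ℝ} (hL : LowTri L)
    (hd : ∀ i, 0 < L i i) : LowTri L⁻¹ := by
  have : Invertible L := L.invertibleOfIsUnitDet (lowTri_isUnit_det hL hd)
  exact lowTri_iff_blockTriangular.mpr
    (Matrix.blockTriangular_inv_of_blockTriangular (lowTri_iff_blockTriangular.mp hL))

lemma lowTri_inv_diag_pos {L : Matrix (Fin d) (Fin d) ℝ} (hL : LowTri L)
    (hd : ∀ i, 0 < L i i) (i : Fin d) : 0 < L⁻¹ i i := by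
  have h1 : L * L⁻¹ = 1 := Matrix.mul_nonsing_inv L (lowTri_isUnit_det hL hd)
  have h2 : L i i * L⁻¹ i i = 1 := by
    rw [← diag_mul_lowTri hL (lowTri_inv hL hd), h1]; simp
  nlinarith [hd i]

/-- A lower triangular matrix with nonnegative diagonal satisfying `L Lᵀ = 1` is `1`. -/
lemma lowTri_orth_eq_one {L : Matrix (Fin d) (Fin d) ℝ} (hL : LowTri L)
    (hd : ∀ i, 0 ≤ L i i) (h : L * Lᵀ = 1) : L = 1 := by
  have key : ∀ N : ℕ, ∀ i : Fin d, i.val < N → ∀ m, L i m = (1 : Matrix (Fin d) (Fin d) ℝ) i m := by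
    intro N
    induction N with
    | zero => intro i hi; omega
    | succ N IH =>
      intro i hi
      have hlow : ∀ m, m < i → L i m = 0 := by
        intro m hm
        have h1 : (L * Lᵀ) i m = (1 : Matrix (Fin d) (Fin d) ℝ) i m := by rw [h]
        rw [Matrix.mul_apply] at h1
        have h2 : ∀ k : Fin d, L i k * Lᵀ k m = if k = m then L i m else 0 := by
          intro k
          rw [Matrix.transpose_apply,
            IH m (by omega : m.val < N) k, Matrix.one_apply]
          rcases eq_or_ne k m with hkm | hkm
          · simp [hkm]
          · simp [hkm, if_neg (Ne.symm hkm)]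
        rw [Finset.sum_congr rfl (fun k _ => h2 k), Finset.sum_ite_eq' _ m,
          if_pos (Finset.mem_univ m), Matrix.one_apply_ne (ne_of_gt hm)] at h1
        exact h1
      intro m
      rcases lt_trichotomy i m with him | him | him
      · rw [hL i m him, Matrix.one_apply_ne (ne_of_lt him)]
      · subst him
        have h1 : (L * Lᵀ) i i = 1 := by rw [h]; simp
        rw [Matrix.mul_apply] at h1
        have h2 : ∀ k : Fin d, L i k * Lᵀ k i = if k = i then L i i * L i i else 0 := by
          intro k
          rw [Matrix.transpose_apply]
          rcases lt_trichotomy i k with hik | hik | hik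
          · rw [hL i k hik, if_neg (ne_of_gt hik), zero_mul]
          · simp [hik]
          · rw [hlow k hik, if_neg (ne_of_lt hik), zero_mul]
        rw [Finset.sum_congr rfl (fun k _ => h2 k), Finset.sum_ite_eq' _ i,
          if_pos (Finset.mem_univ i)] at h1
        have := hd i
        have hLi : L i i = 1 := by nlinarith
        rw [hLi, Matrix.one_apply_eq]
      · rw [hlow m him, Matrix.one_apply_ne (ne_of_gt him)]
  ext i m
  exact key d i i.isLt m

/-- A symmetric real matrix entrywise close to `1` is positive definite. -/
lemma posDef_of_close {W : Matrix (Fin d) (Fin d) ℝ} (hsym : W.IsSymm)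
    (hclose : ∀ i j, |W i j - (1 : Matrix (Fin d) (Fin d) ℝ) i j| ≤ 1 / (2 * (d + 1))) :
    W.PosDef := by
  rw [Matrix.posDef_iff_dotProduct_mulVec]
  constructor
  · rw [Matrix.IsHermitian, Matrix.conjTranspose_eq_transpose_of_trivial]
    exact hsym
  · intro x hx
    set E : Matrix (Fin d) (Fin d) ℝ := W - 1 with hE
    have hW : W = 1 + E := by rw [hE]; abel
    have hS : 0 < ∑ i, x i ^ 2 := by
      obtain ⟨i, hi⟩ := Function.ne_iff.mp hx
      have h0 : x i ≠ 0 := by simpa using hi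
      exact Finset.sum_pos' (fun j _ => sq_nonneg _)
        ⟨i, Finset.mem_univ i, lt_of_le_of_ne (sq_nonneg _) (Ne.symm (pow_ne_zero 2 h0))⟩
    set S := ∑ i, x i ^ 2 with hSdef
    have hbound : |x ⬝ᵥ (E *ᵥ x)| ≤ S / 2 := by
      have h1 : |x ⬝ᵥ (E *ᵥ x)| ≤ ∑ i, ∑ j, (1 / (2 * (d + 1))) * (|x i| * |x j|) := by
        show |∑ i, x i * ∑ j, E i j * x j| ≤ _
        calc |∑ i, x i * ∑ j, E i j * x j| ≤ ∑ i, |x i * ∑ j, E i j * x j| :=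
              Finset.abs_sum_le_sum_abs _ _
          _ ≤ ∑ i, ∑ j, (1 / (2 * (d + 1))) * (|x i| * |x j|) := by
              refine Finset.sum_le_sum fun i _ => ?_
              rw [abs_mul]
              calc |x i| * |∑ j, E i j * x j| ≤ |x i| * ∑ j, (1 / (2 * (d + 1))) * |x j| := by
                    refine mul_le_mul_of_nonneg_left ?_ (abs_nonneg _)
                    calc |∑ j, E i j * x j| ≤ ∑ j, |E i j * x j| :=
                          Finset.abs_sum_le_sum_abs _ _
                      _ ≤ ∑ j, (1 / (2 * (d + 1))) * |x j| := by
                          refine Finset.sum_le_sum fun j _ => ?_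
                          rw [abs_mul]
                          exact mul_le_mul_of_nonneg_right (hclose i j) (abs_nonneg _)
                _ = ∑ j, (1 / (2 * (d + 1))) * (|x i| * |x j|) := by
                    rw [Finset.mul_sum]; congr 1; ext j; ring
      have h2 : ∑ i, ∑ j, (1 / (2 * (↑d + 1))) * (|x i| * |x j|)
          = (1 / (2 * (d + 1))) * (∑ i, |x i|) ^ 2 := by
        rw [sq, Finset.sum_mul_sum]
        rw [Finset.mul_sum]
        congr 1; ext i; rw [Finset.mul_sum]
      have h3 : (∑ i, |x i|) ^ 2 ≤ (d : ℝ) * S := by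
        have := sq_sum_le_card_mul_sum_sq (s := Finset.univ) (f := fun i => |x i|)
        simpa [sq_abs, hSdef] using this
      calc |x ⬝ᵥ (E *ᵥ x)| ≤ (1 / (2 * (d + 1))) * (∑ i, |x i|) ^ 2 := by rw [← h2]; exact h1
        _ ≤ (1 / (2 * (d + 1))) * ((d : ℝ) * S) := by
            refine mul_le_mul_of_nonneg_left h3 (by positivity)
        _ ≤ S / 2 := by
            rw [div_mul_eq_mul_div, mul_comm]
            rw [div_le_div_iff₀ (by positivity) (by norm_num)]
            nlinarith [hS, (Nat.cast_nonneg d : (0:ℝ) ≤ d)]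
    have hquad : star x ⬝ᵥ (W *ᵥ x) = S + x ⬝ᵥ (E *ᵥ x) := by
      rw [hW, Matrix.add_mulVec, Matrix.one_mulVec, dotProduct_add]
      simp only [star_trivial]
      congr 1
      show ∑ i, x i * x i = S
      rw [hSdef]
      congr 1; ext i; ring
    rw [hquad]
    have := neg_abs_le (x ⬝ᵥ (E *ᵥ x))
    linarith

/-- Conjugation preserves positive definiteness (real case, invertible `B`). -/
lemma posDef_conj {W B : Matrix (Fin d) (Fin d) ℝ} (hW : W.PosDef) (hB : IsUnit B.det) :
    (B * W * Bᵀ).PosDef := by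
  rw [Matrix.posDef_iff_dotProduct_mulVec]
  constructor
  · rw [Matrix.IsHermitian, Matrix.conjTranspose_eq_transpose_of_trivial,
      Matrix.transpose_mul, Matrix.transpose_mul, Matrix.transpose_transpose]
    have hWs : Wᵀ = W := by
      have := hW.1
      rwa [Matrix.IsHermitian, Matrix.conjTranspose_eq_transpose_of_trivial] at this
    rw [hWs, Matrix.mul_assoc]
  · intro x hx
    have hBt : IsUnit Bᵀ.det := by rwa [Matrix.det_transpose]
    have hy : Bᵀ *ᵥ x ≠ 0 := by
      intro hcon
      apply hx
      have : (Bᵀ)⁻¹ *ᵥ (Bᵀ *ᵥ x) = x := by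
        rw [Matrix.mulVec_mulVec, Matrix.nonsing_inv_mul _ hBt, Matrix.one_mulVec]
      rw [← this, hcon, Matrix.mulVec_zero]
    have := (Matrix.posDef_iff_dotProduct_mulVec.mp hW).2 hy
    simp only [star_trivial] at this ⊢
    have heq : x ⬝ᵥ ((B * W * Bᵀ) *ᵥ x) = (Bᵀ *ᵥ x) ⬝ᵥ (W *ᵥ (Bᵀ *ᵥ x)) := by
      rw [← Matrix.mulVec_mulVec, ← Matrix.mulVec_mulVec, Matrix.dotProduct_mulVec x B,
        ← Matrix.mulVec_transpose]
    rwa [heq]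


/-- Continuity at the identity of the map `W = L Lᵀ ↦ (L⁻¹)ᵀ` on Cholesky factors,
stated entrywise. -/
lemma chol_cont (d : ℕ) : ∀ ε > (0:ℝ), ∃ δ > (0:ℝ), ∀ L : Matrix (Fin d) (Fin d) ℝ,
    LowTri L → (∀ i, 0 < L i i) →
    (∀ i j, |(L * Lᵀ) i j - (1 : Matrix (Fin d) (Fin d) ℝ) i j| < δ) →
    ∀ i j, |(L⁻¹)ᵀ i j - (1 : Matrix (Fin d) (Fin d) ℝ) i j| < ε := by
  intro ε hε
  by_contra hcon
  push_neg at hcon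
  have hseq : ∀ n : ℕ, ∃ L : Matrix (Fin d) (Fin d) ℝ,
      LowTri L ∧ (∀ i, 0 < L i i) ∧
      (∀ i j, |(L * Lᵀ) i j - (1 : Matrix (Fin d) (Fin d) ℝ) i j| < 1 / (n + 1)) ∧
      ε ≤ ∑ p : Fin d × Fin d, |(L⁻¹)ᵀ p.1 p.2 - (1 : Matrix (Fin d) (Fin d) ℝ) p.1 p.2| := by
    intro n
    obtain ⟨L, h1, h2, h3, i, j, h4⟩ := hcon (1 / (n + 1)) (by positivity)
    refine ⟨L, h1, h2, h3, le_trans h4 ?_⟩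
    have hh := Finset.single_le_sum (s := Finset.univ) (f := fun p : Fin d × Fin d =>
      |(L⁻¹)ᵀ p.1 p.2 - (1 : Matrix (Fin d) (Fin d) ℝ) p.1 p.2|)
      (fun p _ => abs_nonneg _) (Finset.mem_univ (i, j))
    exact hh
  choose L hLtri hLdiag hLclose hLfar using hseq
  have hone : ∀ n : ℕ, (1:ℝ) / (n + 1) ≤ 1 := by
    intro n
    rw [div_le_one (by positivity)]
    linarith [Nat.cast_nonneg (α := ℝ) n]
  -- uniform bound on the entries of `L n`, in the pi-type `Fin d → Fin d → ℝ`
  have hdiag2 : ∀ n i, (L n * (L n)ᵀ) i i ≤ 2 := by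
    intro n i
    have h1 := hLclose n i i
    rw [Matrix.one_apply_eq] at h1
    have := (abs_lt.mp (lt_of_lt_of_le h1 (hone n))).2
    linarith
  have hsq : ∀ n i j, (L n i j) ^ 2 ≤ (L n * (L n)ᵀ) i i := by
    intro n i j
    rw [Matrix.mul_apply]
    have hnn : ∀ k : Fin d, (0:ℝ) ≤ L n i k * (L n)ᵀ k i := by
      intro k; rw [Matrix.transpose_apply]; exact mul_self_nonneg _
    calc (L n i j) ^ 2 = L n i j * (L n)ᵀ j i := by rw [Matrix.transpose_apply]; ring
      _ ≤ ∑ k, L n i k * (L n)ᵀ k i := Finset.single_le_sum (fun k _ => hnn k) (Finset.mem_univ j)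
  set u : ℕ → (Fin d → Fin d → ℝ) := fun n => L n with hu
  have hbdd : ∀ n, u n ∈ Metric.closedBall (0 : Fin d → Fin d → ℝ) 2 := by
    intro n
    rw [Metric.mem_closedBall]
    refine (dist_pi_le_iff (by norm_num)).2 fun i => (dist_pi_le_iff (by norm_num)).2 fun j => ?_
    have habs : |L n i j| ≤ 2 := by nlinarith [hsq n i j, hdiag2 n i, abs_nonneg (L n i j), sq_abs (L n i j)]
    simpa [hu, Real.dist_eq] using habs
  obtain ⟨x₀, _, φ, hφmono, hφtendsto⟩ :=
    (isCompact_closedBall (0 : Fin d → Fin d → ℝ) 2).tendsto_subseq hbdd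
  set L₀ : Matrix (Fin d) (Fin d) ℝ := Matrix.of x₀ with hL₀
  -- entrywise convergence
  have hentry : ∀ i j, Tendsto (fun n => L (φ n) i j) atTop (nhds (L₀ i j)) := by
    intro i j
    exact (((continuous_apply j).comp (continuous_apply i)).tendsto x₀).comp hφtendsto
  have hL₀tri : LowTri L₀ := by
    intro i j hij
    refine tendsto_nhds_unique (hentry i j) ?_
    simp only [fun n => hLtri (φ n) i j hij]
    exact tendsto_const_nhds
  have hL₀diag : ∀ i, 0 ≤ L₀ i i := fun i =>
    le_of_tendsto_of_tendsto' tendsto_const_nhds (hentry i i) (fun n => (hLdiag (φ n) i).le)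
  -- L₀ * L₀ᵀ = 1, entrywise
  have hL₀orth : L₀ * L₀ᵀ = 1 := by
    ext i j
    have h1 : Tendsto (fun n => (L (φ n) * (L (φ n))ᵀ) i j) atTop (nhds ((L₀ * L₀ᵀ) i j)) := by
      simp only [Matrix.mul_apply, Matrix.transpose_apply]
      exact tendsto_finset_sum _ fun k _ => (hentry i k).mul (hentry j k)
    have h2 : Tendsto (fun n => (L (φ n) * (L (φ n))ᵀ) i j) atTop
        (nhds ((1 : Matrix (Fin d) (Fin d) ℝ) i j)) := by
      rw [tendsto_iff_dist_tendsto_zero]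
      refine squeeze_zero (fun n => dist_nonneg) (fun n => ?_)
        tendsto_one_div_add_atTop_nhds_zero_nat
      rw [Real.dist_eq]
      refine le_trans (hLclose (φ n) i j).le ?_
      gcongr
      · exact hφmono.le_apply
    exact tendsto_nhds_unique h1 h2
  have hL₀one : L₀ = 1 := lowTri_orth_eq_one hL₀tri hL₀diag hL₀orth
  -- convergence of the matrix sequence (Matrix topology is the pi topology)
  have hMtendsto : Tendsto (fun n => L (φ n)) atTop (nhds L₀) := hφtendsto
  -- the inverse-transpose error functional is continuous at L₀ = 1
  have hdet : ContinuousAt Ring.inverse (Matrix.det L₀) := by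
    rw [hL₀one, Matrix.det_one, Ring.inverse_eq_inv']
    exact continuousAt_inv₀ one_ne_zero
  have hinv : ContinuousAt Inv.inv L₀ := continuousAt_matrix_inv L₀ hdet
  have hinvtendsto : Tendsto (fun n => (L (φ n))⁻¹) atTop (nhds L₀⁻¹) :=
    hinv.tendsto.comp hMtendsto
  have hinventry : ∀ i j, Tendsto (fun n => ((L (φ n))⁻¹)ᵀ i j) atTop
      (nhds ((1 : Matrix (Fin d) (Fin d) ℝ) i j)) := by
    intro i j
    have h1 : Tendsto (fun n => (L (φ n))⁻¹ j i) atTop (nhds (L₀⁻¹ j i)) :=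
      ((continuous_apply i).tendsto _).comp (((continuous_apply j).tendsto _).comp hinvtendsto)
    have h2 : L₀⁻¹ = 1 := by rw [hL₀one, Matrix.inv_eq_left_inv (mul_one 1)]
    simp only [Matrix.transpose_apply]
    rw [h2] at h1
    convert h1 using 2
    rw [Matrix.one_apply, Matrix.one_apply]
    by_cases hij : i = j <;> simp [hij, eq_comm]
  have hsum : Tendsto (fun n => ∑ p : Fin d × Fin d,
      |((L (φ n))⁻¹)ᵀ p.1 p.2 - (1 : Matrix (Fin d) (Fin d) ℝ) p.1 p.2|) atTop (nhds 0) := by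
    have h0 : (0:ℝ) = ∑ p : Fin d × Fin d, |(1 : Matrix (Fin d) (Fin d) ℝ) p.1 p.2
        - (1 : Matrix (Fin d) (Fin d) ℝ) p.1 p.2| := by simp
    rw [h0]
    exact tendsto_finset_sum _ fun p _ =>
      (((hinventry p.1 p.2).sub tendsto_const_nhds).abs)
  have : ε ≤ 0 := ge_of_tendsto hsum (Eventually.of_forall fun n => hLfar (φ n))
  linarith

theorem sqrt_inverse_transfer'
    {Ω : Type*} [MeasurableSpace Ω] (P : Measure Ω) [IsProbabilityMeasure P]
    {d : ℕ}
    (A : ℕ → Matrix (Fin d) (Fin d) ℝ) (hA : ∀ n, (A n).PosDef)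
    (RA : ℕ → Matrix (Fin d) (Fin d) ℝ)
    (hRA : ∀ n, (∀ i j : Fin d, i < j → RA n i j = 0) ∧ (∀ i, 0 < RA n i i) ∧ RA n * (RA n)ᵀ = A n)
    (V : ℕ → Ω → Matrix (Fin d) (Fin d) ℝ) (hVsymm : ∀ n ω, (V n ω).IsSymm)
    (LV : ℕ → Ω → Matrix (Fin d) (Fin d) ℝ)
    (hChol : ∀ n ω, (V n ω).PosDef → (∀ i j : Fin d, i < j → LV n ω i j = 0) ∧
      (∀ i, 0 < LV n ω i i) ∧ LV n ω * (LV n ω)ᵀ = V n ω)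
    (hconv : ∀ j k : Fin d, MeasureTheory.TendstoInMeasure P
      (fun n ω => ((RA n)⁻¹ * V n ω * ((RA n)⁻¹)ᵀ) j k) atTop
      (fun _ => (1 : Matrix (Fin d) (Fin d) ℝ) j k)) :
    ∀ j k : Fin d, MeasureTheory.TendstoInMeasure P
      (fun n ω => ((RA n)ᵀ * ((LV n ω)⁻¹)ᵀ) j k) atTop
      (fun _ => (1 : Matrix (Fin d) (Fin d) ℝ) j k) := by
  intro j k
  rw [tendstoInMeasure_iff_dist]
  intro ε hε
  obtain ⟨δ, hδpos, hkey⟩ := chol_cont d ε hε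
  set δ' : ℝ := min δ (1 / (2 * (d + 1))) with hδ'def
  have hδ'pos : 0 < δ' := lt_min hδpos (by positivity)
  have hδ'le : δ' ≤ 1 / (2 * (d + 1)) := min_le_right _ _
  have hδ'le2 : δ' ≤ δ := min_le_left _ _
  have hsubset : ∀ n,
      {ω | ε ≤ dist (((RA n)ᵀ * ((LV n ω)⁻¹)ᵀ) j k) ((1 : Matrix (Fin d) (Fin d) ℝ) j k)} ⊆
      ⋃ p : Fin d × Fin d, {ω | δ' ≤
        dist (((RA n)⁻¹ * V n ω * ((RA n)⁻¹)ᵀ) p.1 p.2)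
          ((1 : Matrix (Fin d) (Fin d) ℝ) p.1 p.2)} := by
    intro n ω hω
    simp only [Set.mem_setOf_eq] at hω
    by_contra hno
    simp only [Set.mem_iUnion, Set.mem_setOf_eq, not_exists, not_le] at hno
    obtain ⟨hRAtri, hRAdiag, hRAmul⟩ := hRA n
    have hRAtri' : LowTri (RA n) := hRAtri
    have hRAunit : IsUnit (RA n).det := lowTri_isUnit_det hRAtri' hRAdiag
    set W : Matrix (Fin d) (Fin d) ℝ := (RA n)⁻¹ * V n ω * ((RA n)⁻¹)ᵀ with hWdef
    have hclose : ∀ a b : Fin d, |W a b - (1 : Matrix (Fin d) (Fin d) ℝ) a b| < δ' := by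
      intro a b
      have := hno (a, b)
      rwa [Real.dist_eq] at this
    have hWsymm : W.IsSymm := by
      rw [Matrix.IsSymm, hWdef, Matrix.transpose_mul, Matrix.transpose_mul,
        Matrix.transpose_transpose, (hVsymm n ω).eq, Matrix.mul_assoc]
    have hWpos : W.PosDef := by
      refine posDef_of_close hWsymm fun a b => ?_
      exact le_trans (hclose a b).le hδ'le
    have hinvT : ((RA n)⁻¹)ᵀ * (RA n)ᵀ = 1 := by
      rw [← Matrix.transpose_mul, Matrix.mul_nonsing_inv _ hRAunit, Matrix.transpose_one]
    have hVeq : V n ω = RA n * W * (RA n)ᵀ := by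
      rw [hWdef]
      calc V n ω = (RA n * (RA n)⁻¹) * V n ω * (((RA n)⁻¹)ᵀ * (RA n)ᵀ) := by
            rw [Matrix.mul_nonsing_inv _ hRAunit, hinvT, Matrix.one_mul, Matrix.mul_one]
        _ = RA n * ((RA n)⁻¹ * V n ω * ((RA n)⁻¹)ᵀ) * (RA n)ᵀ := by
            simp only [Matrix.mul_assoc]
    have hVpos : (V n ω).PosDef := by rw [hVeq]; exact posDef_conj hWpos hRAunit
    obtain ⟨hLVtri, hLVdiag, hLVmul⟩ := hChol n ω hVpos
    have hLVtri' : LowTri (LV n ω) := hLVtri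
    set L : Matrix (Fin d) (Fin d) ℝ := (RA n)⁻¹ * LV n ω with hLdef
    have hLtri : LowTri L := lowTri_mul (lowTri_inv hRAtri' hRAdiag) hLVtri'
    have hLdiag : ∀ i, 0 < L i i := by
      intro i
      rw [hLdef, diag_mul_lowTri (lowTri_inv hRAtri' hRAdiag) hLVtri']
      exact mul_pos (lowTri_inv_diag_pos hRAtri' hRAdiag i) (hLVdiag i)
    have hLW : L * Lᵀ = W := by
      rw [hLdef, hWdef, Matrix.transpose_mul]
      calc (RA n)⁻¹ * LV n ω * ((LV n ω)ᵀ * ((RA n)⁻¹)ᵀ)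
          = (RA n)⁻¹ * (LV n ω * (LV n ω)ᵀ) * ((RA n)⁻¹)ᵀ := by simp only [Matrix.mul_assoc]
        _ = (RA n)⁻¹ * V n ω * ((RA n)⁻¹)ᵀ := by rw [hLVmul]
    have hfar : |(L⁻¹)ᵀ j k - (1 : Matrix (Fin d) (Fin d) ℝ) j k| < ε := by
      refine hkey L hLtri hLdiag (fun a b => ?_) j k
      rw [hLW]
      exact lt_of_lt_of_le (hclose a b) hδ'le2
    have hid : (L⁻¹)ᵀ = (RA n)ᵀ * ((LV n ω)⁻¹)ᵀ := by
      rw [hLdef, Matrix.mul_inv_rev, Matrix.nonsing_inv_nonsing_inv _ hRAunit,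
        Matrix.transpose_mul]
    rw [hid] at hfar
    rw [Real.dist_eq] at hω
    linarith
  have hsum : Tendsto (fun n => ∑ p : Fin d × Fin d,
      P {ω | δ' ≤ dist (((RA n)⁻¹ * V n ω * ((RA n)⁻¹)ᵀ) p.1 p.2)
        ((1 : Matrix (Fin d) (Fin d) ℝ) p.1 p.2)}) atTop (nhds 0) := by
    have h0 : (0 : ENNReal) = ∑ _p : Fin d × Fin d, 0 := by simp
    rw [h0]
    exact tendsto_finset_sum _ fun p _ => tendstoInMeasure_iff_dist.mp (hconv p.1 p.2) δ' hδ'pos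
  refine tendsto_of_tendsto_of_tendsto_of_le_of_le tendsto_const_nhds hsum
    (fun n => zero_le) (fun n => ?_)
  exact le_trans (measure_mono (hsubset n)) (measure_iUnion_fintype_le P _)


/-- If `Aₙ^{−1/2} Vₙ Aₙ^{−T/2} → I_d` in probability (Cholesky square roots,
`Aₙ` positive definite nonstochastic), then `Aₙ^{T/2} Vₙ^{−T/2} → I_d` in
probability. -/
theorem sqrt_inverse_transfer
    {Ω : Type*} [MeasurableSpace Ω] (P : Measure Ω) [IsProbabilityMeasure P]
    {d : ℕ}
    (A : ℕ → Matrix (Fin d) (Fin d) ℝ) (hA : ∀ n, (A n).PosDef)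
    (RA : ℕ → Matrix (Fin d) (Fin d) ℝ) (hRA : ∀ n, IsCholesky (A n) (RA n))
    (V : ℕ → Ω → Matrix (Fin d) (Fin d) ℝ) (hVsymm : ∀ n ω, (V n ω).IsSymm)
    (LV : ℕ → Ω → Matrix (Fin d) (Fin d) ℝ)
    (hChol : ∀ n ω, (V n ω).PosDef → IsCholesky (V n ω) (LV n ω))
    (hconv : ∀ j k : Fin d, TendstoInMeasure P
      (fun n ω => ((RA n)⁻¹ * V n ω * ((RA n)⁻¹)ᵀ) j k) atTop
      (fun _ => (1 : Matrix (Fin d) (Fin d) ℝ) j k)) :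
    ∀ j k : Fin d, TendstoInMeasure P
      (fun n ω => ((RA n)ᵀ * ((LV n ω)⁻¹)ᵀ) j k) atTop
      (fun _ => (1 : Matrix (Fin d) (Fin d) ℝ) j k) := by
  exact sqrt_inverse_transfer' P A hA RA hRA V hVsymm LV hChol hconv
end

section
/- Let Z be a random vector in R^d such that, without loss of generality, E(Z^{(j)})² = ∞ for 1 ≤ j ≤ m and E(Z^{(j)})² < ∞ for m+1 ≤ j ≤ d, where 1 ≤ m < d. Assume E|Z^{(j)}Z^{(k)}| < ∞ whenever j ≠ k and one of the second moments is infinite, and that the subvector (Z^{(m+1)},…,Z^{(d)}) is full. Then Z is full, i.e., Var⟨Z, u⟩ > 0 (possibly infinite) for every unit vector u. -/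
open MeasureTheory ProbabilityTheory Filter Matrix
open scoped BigOperators

/-- If the first `m` components of `Z` have infinite second moments, the remaining
components have finite second moments and form a full subvector, and cross products
are integrable whenever one of the second moments is infinite, then `Z` is full:
`⟨Z, u⟩` is nondegenerate for every unit vector `u`. -/
theorem fullness_from_subvector
    {Ω : Type*} [MeasurableSpace Ω] (P : Measure Ω) [IsProbabilityMeasure P]
    {d m : ℕ} (hm1 : 1 ≤ m) (hmd : m < d)
    (Z : Ω → (Fin d → ℝ)) (hmeas : Measurable Z)
    (hinf : ∀ j : Fin d, (j : ℕ) < m → ¬ MemLp (fun ω => Z ω j) 2 P)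
    (hfin : ∀ j : Fin d, m ≤ (j : ℕ) → MemLp (fun ω => Z ω j) 2 P)
    (hcross : ∀ j k : Fin d, j ≠ k →
      (¬ MemLp (fun ω => Z ω j) 2 P ∨ ¬ MemLp (fun ω => Z ω k) 2 P) →
      Integrable (fun ω => Z ω j * Z ω k) P)
    (hfull : ∀ u : Fin d → ℝ, (∀ j : Fin d, (j : ℕ) < m → u j = 0) →
      (∑ j, u j ^ 2) = 1 → ¬ ∃ c : ℝ, ∀ᵐ ω ∂P, (∑ j, Z ω j * u j) = c) :
    ∀ u : Fin d → ℝ, (∑ j, u j ^ 2) = 1 →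
      ¬ ∃ c : ℝ, ∀ᵐ ω ∂P, (∑ j, Z ω j * u j) = c := by
  intro u hu
  by_cases h0 : ∀ j : Fin d, (j : ℕ) < m → u j = 0
  · exact hfull u h0 hu
  · push_neg at h0
    obtain ⟨j0, hj0m, hj0⟩ := h0
    rintro ⟨c, hc⟩
    -- measurability of Z j0
    have hZm : Measurable (fun ω => Z ω j0) := (measurable_pi_apply j0).comp hmeas
    -- g integrable
    set g : Ω → ℝ := fun ω => ∑ j ∈ Finset.univ.erase j0, Z ω j0 * (Z ω j * u j) with hg
    have hgInt : Integrable g P := by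
      apply integrable_finset_sum
      intro j hj
      have hne : j0 ≠ j := (Finset.ne_of_mem_erase hj).symm
      have := hcross j0 j hne (Or.inl (hinf j0 hj0m))
      have h2 : Integrable (fun ω => (Z ω j0 * Z ω j) * u j) P := this.mul_const _
      simpa [mul_assoc, mul_comm, mul_left_comm] using h2
    -- a.e. identity
    have key : ∀ᵐ ω ∂P, Z ω j0 ^ 2 = (c / u j0) * Z ω j0 - g ω / u j0 := by
      filter_upwards [hc] with ω hω
      have expand : Z ω j0 * c = Z ω j0 ^ 2 * u j0 + g ω := by
        rw [← hω, Finset.mul_sum, ← Finset.add_sum_erase _ _ (Finset.mem_univ j0)]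
        ring_nf
        simp [hg, mul_assoc]
      field_simp
      linarith [expand]
    have hbound : ∀ᵐ ω ∂P, ‖Z ω j0 ^ 2‖ ≤ (c / u j0)^2 + 2 * |g ω / u j0| := by
      filter_upwards [key] with ω hω
      rw [Real.norm_eq_abs, abs_of_nonneg (sq_nonneg _)]
      nlinarith [sq_nonneg (c / u j0 - Z ω j0), neg_abs_le (g ω / u j0), le_abs_self (g ω / u j0), abs_nonneg (g ω / u j0)]
    have hIntBound : Integrable (fun ω => (c / u j0)^2 + 2 * |g ω / u j0|) P := by
      apply (integrable_const _).add
      exact ((hgInt.div_const _).abs.const_mul 2)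
    have hsq : Integrable (fun ω => Z ω j0 ^ 2) P :=
      Integrable.mono' hIntBound ((hZm.pow_const 2).aestronglyMeasurable) hbound
    exact hinf j0 hj0m ((memLp_two_iff_integrable_sq hZm.aestronglyMeasurable).mpr hsq)
end
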